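/- Let $(X_i)_{i\ge 1}$ be i.i.d. Bernoulli($p$) random variables and $(\rho_i)_{i\ge 1}$ i.i.d. $\mathbb{N}$-valued random variables independent of the $X_i$'s, with tail $G(j) = \mathbb{P}(\rho \ge j)$. Suppose $\liminf_{j\to\infty} j\,G(j) = l > 1$ and $p > 1/l$. Then almost surely there exists a finite $T$ such that for every $i \ge T$ there are at least two distinct indices $j, k < i$ with $X_j = X_k = 1$, $j + \rho_j \ge i$, and $k + \rho_k \ge i$. -/

import Mathlib

/-!
Fix `i`. The events `E j = {X j = true ∧ i ≤ j + ρ j}`, `1 ≤ j < i`, are independent, and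
reflecting `m = i - j` turns the sum of their probabilities into `S i = ∑_{1 ≤ m < i} p G(m)`.
Since `p m G(m) > c > 1` for large `m`, `S i ≥ c log i - C`. At most one `E j` occurs with
probability at most `∏_j (1 - ℙ E_j) + ∑_j ℙ E_j ∏_{k ≠ j} (1 - ℙ E_k)`, hence at most
`(1 + S i) e^{1 - S i}`, which is `O(i^{-θc})` for every `θ < 1`. Taking `θ c > 1` makes this
summable, and Borel–Cantelli finishes the proof.
-/

open MeasureTheory ProbabilityTheory Filter Finset Real
open scoped ENNReal

lemma prod_one_sub_le_exp_neg_sum {ι : Type*} (s : Finset ι) (q : ι → ℝ)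
    (h1 : ∀ i ∈ s, q i ≤ 1) :
    ∏ i ∈ s, (1 - q i) ≤ exp (-∑ i ∈ s, q i) := by
  rw [← sum_neg_distrib, exp_sum]
  exact prod_le_prod (fun i hi => by linarith [h1 i hi]) fun i _ => one_sub_le_exp_neg _

lemma prod_one_sub_add_sum_mul_prod_erase_le {ι : Type*} [DecidableEq ι] (s : Finset ι)
    (q : ι → ℝ) (h0 : ∀ i ∈ s, 0 ≤ q i) (h1 : ∀ i ∈ s, q i ≤ 1) :
    ∏ i ∈ s, (1 - q i) + ∑ j ∈ s, q j * ∏ i ∈ s.erase j, (1 - q i) ≤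
      (1 + ∑ i ∈ s, q i) * exp (1 - ∑ i ∈ s, q i) := by
  set S := ∑ i ∈ s, q i
  have hnone : ∏ i ∈ s, (1 - q i) ≤ exp (1 - S) :=
    (prod_one_sub_le_exp_neg_sum s q h1).trans (exp_le_exp.2 (by linarith))
  have hone : ∀ j ∈ s, q j * ∏ i ∈ s.erase j, (1 - q i) ≤ q j * exp (1 - S) := by
    intro j hj
    refine mul_le_mul_of_nonneg_left ?_ (h0 j hj)
    refine (prod_one_sub_le_exp_neg_sum _ q fun i hi => h1 i (mem_of_mem_erase hi)).trans ?_
    exact exp_le_exp.2 (by linarith [h1 j hj, add_sum_erase s q hj])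
  calc _ ≤ exp (1 - S) + ∑ j ∈ s, q j * exp (1 - S) := add_le_add hnone (sum_le_sum hone)
    _ = _ := by rw [← sum_mul]; ring

lemma log_le_sum_Ico_inv (i : ℕ) : log i ≤ ∑ m ∈ Ico 1 i, (m : ℝ)⁻¹ := by
  cases i with
  | zero => simp
  | succ n =>
    have := log_add_one_le_harmonic n
    rw [harmonic_eq_sum_Icc] at this
    push_cast at this
    rwa [Ico_add_one_right_eq_Icc, Nat.cast_add_one]

lemma exists_mul_log_sub_le_sum {q : ℕ → ℝ} {c : ℝ} (hc : 0 ≤ c) (hq0 : ∀ m, 0 ≤ q m)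
    (hq : ∀ᶠ m in atTop, c / m ≤ q m) :
    ∃ C, ∀ i : ℕ, c * log i - C ≤ ∑ m ∈ Ico 1 i, q m := by
  obtain ⟨M, hM⟩ := eventually_atTop.1 (hq.and (eventually_ge_atTop 1))
  have hM1 : 1 ≤ M := (hM M le_rfl).2
  refine ⟨∑ m ∈ Ico 1 M, c / m, fun i => ?_⟩
  have hnn : ∀ m : ℕ, 0 ≤ c / m := fun m => div_nonneg hc m.cast_nonneg
  have htail : ∑ m ∈ Ico M i, c / m ≤ ∑ m ∈ Ico 1 i, q m :=
    (sum_le_sum fun m hm => (hM m (mem_Ico.1 hm).1).1).trans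
      (sum_le_sum_of_subset_of_nonneg (Ico_subset_Ico_left hM1) fun m _ _ => hq0 m)
  have hsplit :
      ∑ m ∈ Ico 1 i, c / m ≤ ∑ m ∈ Ico 1 M, c / m + ∑ m ∈ Ico M i, c / m := by
    rw [← sum_union (Ico_disjoint_Ico_consecutive 1 M i)]
    exact sum_le_sum_of_subset_of_nonneg
      (fun m hm => by simp only [mem_union, mem_Ico] at *; omega) fun m _ _ => hnn m
  have hlog : c * log i ≤ ∑ m ∈ Ico 1 i, c / m := by
    simp_rw [div_eq_mul_inv, ← mul_sum]
    exact mul_le_mul_of_nonneg_left (log_le_sum_Ico_inv i) hc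
  linarith

lemma one_add_mul_exp_one_sub_le {θ S : ℝ} (hθ0 : 0 ≤ θ) (hθ1 : θ < 1) :
    (1 + S) * exp (1 - S) ≤ exp (1 - θ * S) / (1 - θ) := by
  have hb : 0 < 1 - θ := by linarith
  have hlin : 1 + S ≤ exp ((1 - θ) * S) / (1 - θ) := by
    rw [le_div_iff₀ hb]
    nlinarith [add_one_le_exp ((1 - θ) * S)]
  calc (1 + S) * exp (1 - S) ≤ exp ((1 - θ) * S) / (1 - θ) * exp (1 - S) :=
        mul_le_mul_of_nonneg_right hlin (exp_pos _).le
    _ = exp (1 - θ * S) / (1 - θ) := by rw [div_mul_eq_mul_div, ← exp_add]; ring_nf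

lemma summable_one_add_mul_exp_one_sub {S : ℕ → ℝ} {c C : ℝ} (hc : 1 < c)
    (hS0 : ∀ i, 0 ≤ S i) (hS : ∀ i : ℕ, c * log i - C ≤ S i) :
    Summable fun i => (1 + S i) * exp (1 - S i) := by
  obtain ⟨θ, hθ0, hθ1, hθc⟩ : ∃ θ : ℝ, 0 ≤ θ ∧ θ < 1 ∧ 1 < θ * c :=
    ⟨(c + 1) / (2 * c), by positivity, by rw [div_lt_one (by positivity)]; linarith,
      by field_simp; linarith⟩
  set K := exp (1 + θ * C) / (1 - θ)
  have hsum : Summable fun i : ℕ => K * (i : ℝ) ^ (-(θ * c)) :=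
    (summable_nat_rpow.2 (by linarith)).mul_left K
  refine hsum.of_norm_bounded_eventually_nat ((eventually_ge_atTop 1).mono fun i hi => ?_)
  have hi0 : (0 : ℝ) < i := by exact_mod_cast hi
  rw [Real.norm_of_nonneg (by have := hS0 i; positivity)]
  calc (1 + S i) * exp (1 - S i) ≤ exp (1 - θ * S i) / (1 - θ) :=
        one_add_mul_exp_one_sub_le hθ0 hθ1
    _ ≤ exp (1 - θ * (c * log i - C)) / (1 - θ) :=
        div_le_div_of_nonneg_right
          (exp_le_exp.2 (by linarith [mul_le_mul_of_nonneg_left (hS i) hθ0])) (by linarith)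
    _ = K * (i : ℝ) ^ (-(θ * c)) := by
        rw [rpow_def_of_pos hi0, div_mul_eq_mul_div, ← exp_add]
        ring_nf

lemma exists_one_lt_eventually_div_le {p : ℝ} {G : ℕ → ℝ≥0∞} (hG : ∀ m, G m ≠ ∞)
    (h : 1 / liminf (fun j : ℕ => (j : ℝ≥0∞) * G j) atTop < ENNReal.ofReal p) :
    ∃ c, 1 < c ∧ ∀ᶠ m : ℕ in atTop, c / m ≤ p * (G m).toReal := by
  set L := liminf (fun j : ℕ => (j : ℝ≥0∞) * G j) atTop
  have hp0 : ENNReal.ofReal p ≠ 0 := (pos_of_gt h).ne'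
  have hp : 0 < p := ENNReal.ofReal_pos.1 (pos_iff_ne_zero.2 hp0)
  have hpL : 1 / ENNReal.ofReal p < L := by
    rw [ENNReal.div_lt_iff (Or.inr one_ne_zero) (Or.inr ENNReal.one_ne_top)] at h ⊢
    rwa [mul_comm]
  obtain ⟨r, hpr, hr⟩ := exists_between hpL
  have hrp : 1 < r.toReal * p := by
    rw [ENNReal.div_lt_iff (Or.inl hp0) (Or.inl ENNReal.ofReal_ne_top)] at hpr
    simpa [ENNReal.toReal_mul, hp.le] using (ENNReal.toReal_lt_toReal ENNReal.one_ne_top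
      (ENNReal.mul_ne_top hr.ne_top ENNReal.ofReal_ne_top)).2 hpr
  refine ⟨p * r.toReal, by linarith, ?_⟩
  filter_upwards [eventually_lt_of_lt_liminf hr, eventually_ge_atTop 1] with m hm hm1
  have hm0 : (0 : ℝ) < m := by exact_mod_cast hm1
  have hrm : r.toReal ≤ m * (G m).toReal := by
    simpa [ENNReal.toReal_mul] using
      ENNReal.toReal_mono (ENNReal.mul_ne_top (ENNReal.natCast_ne_top m) (hG m)) hm.le
  rw [div_le_iff₀ hm0]
  nlinarith

namespace ProbabilityTheory

variable {Ω ι β : Type*} {_ : MeasurableSpace Ω} {μ : Measure Ω}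

lemma iIndepFun.iIndepSet_preimage [MeasurableSpace β] {f : ι → Ω → β} (hf : iIndepFun f μ)
    (hfm : ∀ i, Measurable (f i)) {T : ι → Set β} (hT : ∀ i, MeasurableSet (T i)) :
    iIndepSet (fun i => f i ⁻¹' T i) μ :=
  (iIndepSet_iff_meas_biInter fun i => hfm i (hT i)).2 fun s =>
    hf.measure_inter_preimage_eq_mul s fun i _ => hT i

lemma ae_eventually_notMem_of_summable_measureReal [IsFiniteMeasure μ] {s : ℕ → Set Ω}
    (hs : Summable fun i => μ.real (s i)) : ∀ᵐ ω ∂μ, ∀ᶠ i in atTop, ω ∉ s i :=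
  ae_eventually_notMem (by simpa [ofReal_measureReal] using hs.tsum_ofReal_ne_top)

variable {A : ι → Set Ω} [IsProbabilityMeasure μ]

lemma iIndepSet.measureReal_biInter_compl (hA : iIndepSet A μ) (hAm : ∀ i, MeasurableSet (A i))
    (s : Finset ι) : μ.real (⋂ i ∈ s, (A i)ᶜ) = ∏ i ∈ s, (1 - μ.real (A i)) := by
  have hcompl : μ (⋂ i ∈ s, (A i)ᶜ) = ∏ i ∈ s, μ (A i)ᶜ :=
    ((iIndepSet_iff_iIndep A μ).1 hA).meas_biInter fun i _ =>
      (MeasurableSpace.measurableSet_generateFrom (Set.mem_singleton _)).compl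
  rw [measureReal_def, hcompl, ENNReal.toReal_prod]
  exact prod_congr rfl fun i _ => probReal_compl_eq_one_sub (hAm i)

lemma iIndepSet.measureReal_inter_biInter_compl_erase [DecidableEq ι] (hA : iIndepSet A μ)
    (hAm : ∀ i, MeasurableSet (A i)) {s : Finset ι} {j : ι} (hj : j ∈ s) :
    μ.real ((⋂ i ∈ s.erase j, (A i)ᶜ) ∩ A j) =
      μ.real (A j) * ∏ i ∈ s.erase j, (1 - μ.real (A i)) := by
  have hsplit := measureReal_inter_add_sdiff (μ := μ) (s := ⋂ i ∈ s.erase j, (A i)ᶜ) (hAm j)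
  have hdiff : (⋂ i ∈ s.erase j, (A i)ᶜ) \ A j = ⋂ i ∈ s, (A i)ᶜ := by
    conv_rhs => rw [← insert_erase hj, set_biInter_insert]
    rw [Set.sdiff_eq, Set.inter_comm]
  rw [hdiff, hA.measureReal_biInter_compl hAm, hA.measureReal_biInter_compl hAm,
    ← mul_prod_erase s _ hj] at hsplit
  linarith

lemma iIndepSet.measureReal_atMostOne_le [DecidableEq ι] (hA : iIndepSet A μ)
    (hAm : ∀ i, MeasurableSet (A i)) (s : Finset ι) :
    μ.real {ω | ∀ i ∈ s, ∀ j ∈ s, ω ∈ A i → ω ∈ A j → i = j} ≤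
      ∏ i ∈ s, (1 - μ.real (A i)) +
        ∑ j ∈ s, μ.real (A j) * ∏ i ∈ s.erase j, (1 - μ.real (A i)) := by
  have hsub : {ω | ∀ i ∈ s, ∀ j ∈ s, ω ∈ A i → ω ∈ A j → i = j} ⊆
      (⋂ i ∈ s, (A i)ᶜ) ∪ ⋃ j ∈ s, (⋂ i ∈ s.erase j, (A i)ᶜ) ∩ A j := by
    intro ω hω
    by_cases h : ∃ j ∈ s, ω ∈ A j
    · obtain ⟨j, hj, hωj⟩ := h
      refine Or.inr (Set.mem_biUnion hj ⟨?_, hωj⟩)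
      simp only [Set.mem_iInter, Set.mem_compl_iff, mem_erase]
      exact fun i ⟨hij, hi⟩ hωi => hij (hω i hi j hj hωi hωj)
    · push Not at h
      exact Or.inl (by simpa using h)
  calc _ ≤ μ.real (⋂ i ∈ s, (A i)ᶜ) +
          μ.real (⋃ j ∈ s, (⋂ i ∈ s.erase j, (A i)ᶜ) ∩ A j) :=
        (measureReal_mono hsub).trans (measureReal_union_le _ _)
    _ ≤ μ.real (⋂ i ∈ s, (A i)ᶜ) +
          ∑ j ∈ s, μ.real ((⋂ i ∈ s.erase j, (A i)ᶜ) ∩ A j) :=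
        add_le_add_right (measureReal_biUnion_finset_le _ _) _
    _ = _ := by
        rw [hA.measureReal_biInter_compl hAm]
        exact congrArg _ (sum_congr rfl fun j hj => hA.measureReal_inter_biInter_compl_erase hAm hj)

lemma iIndepSet.measureReal_atMostOne_le_exp [DecidableEq ι] (hA : iIndepSet A μ)
    (hAm : ∀ i, MeasurableSet (A i)) (s : Finset ι) :
    μ.real {ω | ∀ i ∈ s, ∀ j ∈ s, ω ∈ A i → ω ∈ A j → i = j} ≤
      (1 + ∑ i ∈ s, μ.real (A i)) * exp (1 - ∑ i ∈ s, μ.real (A i)) :=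
  (hA.measureReal_atMostOne_le hAm s).trans <| prod_one_sub_add_sum_mul_prod_erase_le s _
    (fun _ _ => measureReal_nonneg) fun _ _ => measureReal_le_one

end ProbabilityTheory

def coverEvent {Ω : Type*} (X : ℕ → Ω → Bool) (ρ : ℕ → Ω → ℕ) (i j : ℕ) : Set Ω :=
  {ω | X j ω = true ∧ i ≤ j + ρ j ω}

section CoverEvent

variable {Ω : Type*} [MeasurableSpace Ω] {μ : Measure Ω} {X : ℕ → Ω → Bool} {ρ : ℕ → Ω → ℕ}

lemma measurableSet_coverEvent (hXm : ∀ j, Measurable (X j)) (hρm : ∀ j, Measurable (ρ j))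
    (i j : ℕ) : MeasurableSet (coverEvent X ρ i j) :=
  (hXm j).prodMk (hρm j)
    (MeasurableSet.of_discrete : MeasurableSet {x : Bool × ℕ | x.1 = true ∧ i ≤ j + x.2})

lemma iIndepSet_coverEvent (hXm : ∀ j, Measurable (X j)) (hρm : ∀ j, Measurable (ρ j))
    (hindep : iIndepFun (fun j ω => (X j ω, ρ j ω)) μ) (i : ℕ) :
    iIndepSet (coverEvent X ρ i) μ :=
  hindep.iIndepSet_preimage (fun j => (hXm j).prodMk (hρm j))
    (T := fun j => {x | x.1 = true ∧ i ≤ j + x.2}) fun _ => MeasurableSet.of_discrete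

lemma measureReal_coverEvent {p : ℝ} (hp : 0 ≤ p) {R : Ω → ℕ} {i j : ℕ}
    (hpair : IndepFun (X j) (ρ j) μ) (hX : μ {ω | X j ω = true} = ENNReal.ofReal p)
    (hρ : IdentDistrib (ρ j) R μ μ) :
    μ.real (coverEvent X ρ i j) = p * μ.real {ω | i - j ≤ R ω} := by
  have hsplit : coverEvent X ρ i j = X j ⁻¹' {true} ∩ ρ j ⁻¹' Set.Ici (i - j) := by
    ext ω
    simp [coverEvent, add_comm]
  rw [measureReal_def, hsplit, hpair.measure_inter_preimage_eq_mul _ _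
    MeasurableSet.of_discrete MeasurableSet.of_discrete,
    hρ.measure_mem_eq MeasurableSet.of_discrete, ENNReal.toReal_mul,
    show X j ⁻¹' {true} = {ω | X j ω = true} from rfl, hX, ENNReal.toReal_ofReal hp]
  rfl

end CoverEvent

theorem stmt8_general {Ω : Type*} [MeasureSpace Ω] [IsProbabilityMeasure (ℙ : Measure Ω)]
    (p : ℝ) (hp : p ∈ Set.Ioc (0 : ℝ) 1) (X : ℕ → Ω → Bool) (ρ : ℕ → Ω → ℕ)
    (hXm : ∀ i, Measurable (X i)) (hρm : ∀ i, Measurable (ρ i))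
    (hindep : iIndepFun (fun i ω => (X i ω, ρ i ω)) ℙ)
    (hpair : ∀ i, IndepFun (X i) (ρ i) ℙ)
    (hX : ∀ i, ℙ {ω | X i ω = true} = ENNReal.ofReal p)
    (hρ : ∀ i, IdentDistrib (ρ i) (ρ 1) ℙ ℙ)
    (l : ℝ≥0∞)
    (hliminf : Filter.atTop.liminf
      (fun j : ℕ => (j : ℝ≥0∞) * ℙ {ω | j ≤ ρ 1 ω}) = l)
    (hpl : 1 / l < ENNReal.ofReal p) :
    ∀ᵐ ω ∂ℙ, ∃ T : ℕ, ∀ i, T ≤ i →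
      ∃ j k : ℕ, j ≠ k ∧ 1 ≤ j ∧ j < i ∧ 1 ≤ k ∧ k < i ∧
        X j ω = true ∧ X k ω = true ∧ i ≤ j + ρ j ω ∧ i ≤ k + ρ k ω := by
  set q : ℕ → ℝ := fun m => p * (ℙ : Measure Ω).real {ω | m ≤ ρ 1 ω}
  have hS : ∀ i,
      ∑ j ∈ Ico 1 i, (ℙ : Measure Ω).real (coverEvent X ρ i j) = ∑ m ∈ Ico 1 i, q m := by
    intro i
    simp_rw [measureReal_coverEvent hp.1.le (hpair _) (hX _) (hρ _)]
    rw [sum_Ico_reflect q 1 (Nat.le_succ i)]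
    simp
  obtain ⟨c, hc1, hc⟩ := exists_one_lt_eventually_div_le (fun _ => measure_ne_top _ _)
    (hliminf ▸ hpl)
  obtain ⟨C, hC⟩ :=
    exists_mul_log_sub_le_sum (by linarith) (fun _ => mul_nonneg hp.1.le measureReal_nonneg) hc
  have hbad : Summable fun i => (ℙ : Measure Ω).real
      {ω | ∀ j ∈ Ico 1 i, ∀ k ∈ Ico 1 i,
        ω ∈ coverEvent X ρ i j → ω ∈ coverEvent X ρ i k → j = k} :=
    .of_nonneg_of_le (fun _ => measureReal_nonneg)
      (fun i => (iIndepSet_coverEvent hXm hρm hindep i).measureReal_atMostOne_le_exp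
        (measurableSet_coverEvent hXm hρm i) _)
      (summable_one_add_mul_exp_one_sub hc1 (fun _ => sum_nonneg fun _ _ => measureReal_nonneg)
        fun i => (hC i).trans_eq (hS i).symm)
  filter_upwards [ae_eventually_notMem_of_summable_measureReal hbad] with ω hω
  obtain ⟨T, hT⟩ := eventually_atTop.1 hω
  refine ⟨T, fun i hi => ?_⟩
  simp only [not_forall, mem_Ico] at hT
  obtain ⟨j, ⟨hj1, hji⟩, k, ⟨hk1, hki⟩, ⟨hXj, hρj⟩, ⟨hXk, hρk⟩, hjk⟩ := hT i hi
  exact ⟨j, k, hjk, hj1, hji, hk1, hki, hXj, hXk, hρj, hρk⟩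

/-- percolation half of Proposition 2.1: If
`liminf_j j·P(ρ ≥ j) = l > 1` and `p > 1/l`, then almost surely there is a finite
`T` such that every `i ≥ T` is covered by at least two distinct open sources. -/
theorem stmt8 {Ω : Type*} [MeasureSpace Ω] [IsProbabilityMeasure (ℙ : Measure Ω)]
    (p : ℝ) (hp : p ∈ Set.Ioc (0 : ℝ) 1) (X : ℕ → Ω → Bool) (ρ : ℕ → Ω → ℕ)
    (hXm : ∀ i, Measurable (X i)) (hρm : ∀ i, Measurable (ρ i))
    (hindep : iIndepFun (fun i ω => (X i ω, ρ i ω)) ℙ)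
    (hpair : ∀ i, IndepFun (X i) (ρ i) ℙ)
    (hX : ∀ i, ℙ {ω | X i ω = true} = ENNReal.ofReal p)
    (hρ : ∀ i, IdentDistrib (ρ i) (ρ 1) ℙ ℙ)
    (l : ℝ≥0∞)
    (hliminf : Filter.atTop.liminf
      (fun j : ℕ => (j : ℝ≥0∞) * ℙ {ω | j ≤ ρ 1 ω}) = l)
    (hl : 1 < l) (hpl : 1 / l < ENNReal.ofReal p) :
    ∀ᵐ ω ∂ℙ, ∃ T : ℕ, ∀ i, T ≤ i →
      ∃ j k : ℕ, j ≠ k ∧ 1 ≤ j ∧ j < i ∧ 1 ≤ k ∧ k < i ∧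
        X j ω = true ∧ X k ω = true ∧ i ≤ j + ρ j ω ∧ i ≤ k + ρ k ω :=
  stmt8_general p hp X ρ hXm hρm hindep hpair hX hρ l hliminf hpl
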